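/- arXiv:2203.10751 — 2 statements merged into one kernel-verified Lean document; each statement's English description precedes it below -/
import Mathlib

section
/- Let p be an odd prime, n a quadratic residue modulo p, and a an element of F_p such that a^2 - n is a quadratic nonresidue modulo p. Then in the field F_p(√w) where w = a^2 - n, the element x = (a + √w)^((p+1)/2) satisfies x^2 = n (as elements of F_p embedded in F_p(√w)). -/
/-!
Since `w = a^2 - n` is a nonsquare, `s^p = w^((p-1)/2) * s = -s`, so the Frobenius map acts on
`F_p(s)` as conjugation `a + s ↦ a - s`. Hence `(a + s)^(p+1)` is the norm `a^2 - s^2 = n`.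
-/

theorem pow_two_mul_add_one_eq_neg_of_sq_eq {M : Type*} [Monoid M] [HasDistribNeg M]
    {s c : M} {k : ℕ} (hs : s ^ 2 = c) (hc : c ^ k = -1) : s ^ (2 * k + 1) = -s := by
  rw [pow_succ, pow_mul, hs, hc, neg_one_mul]

section CharP

variable {R : Type*} [CommRing R] (p : ℕ) [Fact p.Prime] [CharP R p] {x y : R}

theorem add_pow_char_eq_sub_of_pow_char_eq_neg (hx : x ^ p = x) (hy : y ^ p = -y) :
    (x + y) ^ p = x - y := by
  rw [add_pow_char, hx, hy, sub_eq_add_neg]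

theorem add_pow_char_add_one_eq_sq_sub_sq (hx : x ^ p = x) (hy : y ^ p = -y) :
    (x + y) ^ (p + 1) = x ^ 2 - y ^ 2 := by
  rw [pow_succ, add_pow_char_eq_sub_of_pow_char_eq_neg p hx hy]
  ring

end CharP

theorem stmt_0_general (p : ℕ) (hp : p.Prime) (hodd : Odd p)
    (K : Type*) [Field K] [Algebra (ZMod p) K]
    (n a : ZMod p)
    (hns : (a ^ 2 - n) ^ ((p - 1) / 2) = -1)
    (s : K) (hs : s ^ 2 = algebraMap (ZMod p) K (a ^ 2 - n)) :
    ((algebraMap (ZMod p) K a + s) ^ ((p + 1) / 2)) ^ 2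
      = algebraMap (ZMod p) K n := by
  have := Fact.mk hp
  have : CharP K p := charP_of_injective_algebraMap (algebraMap (ZMod p) K).injective p
  set φ := algebraMap (ZMod p) K
  have ha : φ a ^ p = φ a := by rw [← map_pow, ZMod.pow_card]
  have hsp : s ^ p = -s := by
    have hp_eq : 2 * ((p - 1) / 2) + 1 = p := by
      obtain ⟨k, rfl⟩ := hodd
      omega
    rw [← hp_eq]
    exact pow_two_mul_add_one_eq_neg_of_sq_eq hs (by rw [← map_pow, hns, map_neg, map_one])
  calc ((φ a + s) ^ ((p + 1) / 2)) ^ 2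
      = (φ a + s) ^ (p + 1) := by rw [← pow_mul, Nat.div_two_mul_two_of_even hodd.add_one]
    _ = φ a ^ 2 - s ^ 2 := add_pow_char_add_one_eq_sq_sub_sq p ha hsp
    _ = φ n := by rw [hs, ← map_pow, ← map_sub, sub_sub_cancel]

/-- Cipolla's algorithm, key identity: if `a^2 - n` is a nonsquare (Euler criterion
value `-1`) and `s` is a square root of `a^2 - n` in an extension field of `F_p`,
then `x = (a + s)^((p+1)/2)` satisfies `x^2 = n`. -/
theorem stmt_0 (p : ℕ) (hp : p.Prime) (hodd : Odd p)
    (K : Type*) [Field K] [Algebra (ZMod p) K]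
    (n a : ZMod p) (hn : IsSquare n)
    (hns : (a ^ 2 - n) ^ ((p - 1) / 2) = -1)
    (s : K) (hs : s ^ 2 = algebraMap (ZMod p) K (a ^ 2 - n)) :
    ((algebraMap (ZMod p) K a + s) ^ ((p + 1) / 2)) ^ 2
      = algebraMap (ZMod p) K n :=
  stmt_0_general p hp hodd K n a hns s hs
end

section
/- Let p be an odd prime, n a nonzero quadratic residue mod p, and a ∈ F_p such that w = a² - n is a nonsquare in F_p. Let x = (a + √w)^{(p+1)/2} ∈ F_{p^2}. Then x² = n and x ∈ F_p (image of F_p in F_{p^2}), i.e., x^p = x. -/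
/-- Full correctness of Cipolla's algorithm: if `n ≠ 0` is a square in `F_p`,
`w = a² - n` is a nonsquare with square root `√w = s` in `F_{p^2}`, then
`x = (a + √w)^((p+1)/2)` satisfies `x² = n` and `x` lies in (the image of) `F_p`. -/
theorem stmt_14 (p : ℕ) [Fact p.Prime] (hodd : Odd p)
    (n a : ZMod p) (hn0 : n ≠ 0) (hn : IsSquare n)
    (hw : ¬ IsSquare (a ^ 2 - n))
    (s : GaloisField p 2)
    (hs : s ^ 2 = algebraMap (ZMod p) (GaloisField p 2) (a ^ 2 - n)) :
    ((algebraMap (ZMod p) (GaloisField p 2) a + s) ^ ((p + 1) / 2)) ^ 2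
        = algebraMap (ZMod p) (GaloisField p 2) n ∧
    (algebraMap (ZMod p) (GaloisField p 2) a + s) ^ ((p + 1) / 2)
        ∈ Set.range (algebraMap (ZMod p) (GaloisField p 2)) := by
  have hp := Fact.out (p := p.Prime)
  have hp2 : p ≠ 2 := by rintro rfl; exact (Nat.not_odd_iff_even.mpr (by norm_num)) hodd
  obtain ⟨k, hk⟩ := hodd
  set f : ZMod p →+* GaloisField p 2 := algebraMap (ZMod p) (GaloisField p 2) with hf
  have hchar : ringChar (ZMod p) ≠ 2 := by
    rw [ZMod.ringChar_zmod_n]; exact hp2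
  set w : ZMod p := a ^ 2 - n with hwdef
  have hw0 : w ≠ 0 := fun h => hw (h ▸ IsSquare.zero)
  have heuler : w ^ ((p - 1) / 2) = -1 := by
    have hcard : Fintype.card (ZMod p) = p := ZMod.card p
    have := FiniteField.pow_dichotomy hchar hw0
    rw [hcard] at this
    rcases this with h | h
    · exact absurd ((FiniteField.isSquare_iff hchar hw0).mpr (by rw [hcard]; exact h)) hw
    · have : p / 2 = (p - 1) / 2 := by omega
      rwa [this] at h
  have hsp : s ^ p = -s := by
    have hpdecomp : p = 2 * ((p - 1) / 2) + 1 := by omega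
    calc s ^ p = (s ^ 2) ^ ((p - 1) / 2) * s := by
          rw [← pow_mul, ← pow_succ, ← hpdecomp]
      _ = f (w ^ ((p - 1) / 2)) * s := by rw [hs, ← map_pow]
      _ = -s := by rw [heuler, map_neg, map_one, neg_one_mul]
  have hfrob : (f a + s) ^ p = f a - s := by
    rw [add_pow_char, hsp, ← map_pow, ZMod.pow_card, sub_eq_add_neg]
  have hkey : (f a + s) ^ (p + 1) = f n := by
    rw [pow_succ, hfrob]
    have h1 : (f a - s) * (f a + s) = f a ^ 2 - s ^ 2 := by ring
    rw [h1, hs, ← map_pow, ← map_sub]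
    congr 1; rw [hwdef]; ring
  have hx2 : ((f a + s) ^ ((p + 1) / 2)) ^ 2 = f n := by
    rw [← pow_mul]
    have h2 : (p + 1) / 2 * 2 = p + 1 := by omega
    rw [h2, hkey]
  refine ⟨hx2, ?_⟩
  obtain ⟨m, hm⟩ := hn
  set x := (f a + s) ^ ((p + 1) / 2) with hxdef
  have h0 : (x - f m) * (x + f m) = 0 := by
    have h3 : (x - f m) * (x + f m) = x ^ 2 - f m ^ 2 := by ring
    rw [h3, hx2, ← map_pow, ← map_sub, hm, sq]
    simp
  rcases mul_eq_zero.mp h0 with h | h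
  · exact ⟨m, by linear_combination -h⟩
  · exact ⟨-m, by rw [map_neg]; linear_combination -h⟩
end
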